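/- arXiv:1109.6570 — 3 statements merged into one kernel-verified Lean document; each statement's English description precedes it below -/
import Mathlib

section
/- Let s ∈ (1/2, 1). The function y ↦ (∫_0^y (1−t)^s t^{2s−2} dt) / (∫_0^y t^{2s−2} dt) is decreasing (nonincreasing) on (0,1). -/
open MeasureTheory intervalIntegral

theorem stmt3 (s : ℝ) (hs : 1/2 < s) (hs1 : s < 1) :
    AntitoneOn
      (fun y : ℝ =>
        (∫ t in (0:ℝ)..y, (1 - t) ^ s * t ^ (2 * s - 2)) /
          ∫ t in (0:ℝ)..y, t ^ (2 * s - 2))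
      (Set.Ioo (0:ℝ) 1) := by
  intro x hx y hy hxy
  obtain ⟨hx0, hx1⟩ := hx
  obtain ⟨hy0, hy1⟩ := hy
  have hr : (-1:ℝ) < 2*s - 2 := by linarith
  have hs0 : (0:ℝ) ≤ s := by linarith
  set w : ℝ → ℝ := fun t => t ^ (2*s-2) with hw
  set f : ℝ → ℝ := fun t => (1-t)^s * t ^ (2*s-2) with hf
  have hwint : ∀ c : ℝ, IntervalIntegrable w volume 0 c := fun c =>
    intervalIntegral.intervalIntegrable_rpow' hr
  have hfmeas : Measurable f := by
    fun_prop
  have hfint : ∀ c : ℝ, 0 < c → c < 1 → IntervalIntegrable f volume 0 c := by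
    intro c hc0 hc1
    apply (hwint c).mono_fun hfmeas.aestronglyMeasurable
    rw [Filter.EventuallyLE, ae_restrict_iff' measurableSet_uIoc]
    apply ae_of_all
    intro t ht
    rw [Set.uIoc_of_le hc0.le] at ht
    have ht0 : 0 < t := ht.1
    have ht1 : t ≤ 1 := le_of_lt (lt_of_le_of_lt ht.2 hc1)
    have h1 : (1-t)^s ≤ 1 := Real.rpow_le_one (by linarith) (by linarith) hs0
    have h2 : 0 ≤ t ^ (2*s-2) := Real.rpow_nonneg ht0.le _
    have h3 : 0 ≤ (1-t)^s := Real.rpow_nonneg (by linarith) _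
    simp only [hf, hw, Real.norm_eq_abs]
    rw [abs_of_nonneg (mul_nonneg h3 h2), abs_of_nonneg h2]
    nlinarith
  have hwpos : ∀ c : ℝ, 0 < c → 0 < ∫ t in (0:ℝ)..c, w t := by
    intro c hc
    apply intervalIntegral.intervalIntegral_pos_of_pos_on (hwint c) _ hc
    intro t ht
    exact Real.rpow_pos_of_pos ht.1 _
  have hwxyint : IntervalIntegrable w volume x y := (hwint x).symm.trans (hwint y)
  have hfxyint : IntervalIntegrable f volume x y :=
    (hfint x hx0 hx1).symm.trans (hfint y hy0 hy1)
  set Dx := ∫ t in (0:ℝ)..x, w t with hDx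
  set Dy := ∫ t in (0:ℝ)..y, w t with hDy
  set Nx := ∫ t in (0:ℝ)..x, f t with hNx
  set Ny := ∫ t in (0:ℝ)..y, f t with hNy
  set M := ∫ t in x..y, f t with hM
  set Wxy := ∫ t in x..y, w t with hWxy
  have hDsum : Dx + Wxy = Dy := integral_add_adjacent_intervals (hwint x) hwxyint
  have hNsum : Nx + M = Ny := integral_add_adjacent_intervals (hfint x hx0 hx1) hfxyint
  have hWnn : 0 ≤ Wxy := by
    apply intervalIntegral.integral_nonneg hxy
    intro t ht
    exact Real.rpow_nonneg (le_trans hx0.le ht.1) _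
  have hDxpos : 0 < Dx := hwpos x hx0
  have hDypos : 0 < Dy := hwpos y hy0
  set g : ℝ := (1-x)^s with hg
  have hMle : M ≤ g * Wxy := by
    rw [hM, hWxy, ← intervalIntegral.integral_const_mul]
    apply intervalIntegral.integral_mono_on hxy hfxyint (hwxyint.const_mul g)
    intro t ht
    have ht0 : 0 ≤ t := le_trans hx0.le ht.1
    have h2 : 0 ≤ t ^ (2*s-2) := Real.rpow_nonneg ht0 _
    have h1 : (1-t)^s ≤ g := Real.rpow_le_rpow (by linarith [ht.2]) (by linarith [ht.1]) hs0
    exact mul_le_mul_of_nonneg_right h1 h2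
  have hNge : g * Dx ≤ Nx := by
    rw [hNx, hDx, ← intervalIntegral.integral_const_mul]
    apply intervalIntegral.integral_mono_on hx0.le ((hwint x).const_mul g) (hfint x hx0 hx1)
    intro t ht
    have h2 : 0 ≤ t ^ (2*s-2) := Real.rpow_nonneg ht.1 _
    have h1 : g ≤ (1-t)^s := Real.rpow_le_rpow (by linarith) (by linarith [ht.2]) hs0
    exact mul_le_mul_of_nonneg_right h1 h2
  show Ny / Dy ≤ Nx / Dx
  rw [div_le_div_iff₀ hDypos hDxpos, ← hDsum, ← hNsum]
  nlinarith [mul_le_mul_of_nonneg_right hMle hDxpos.le,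
    mul_le_mul_of_nonneg_right hNge hWnn]
end

section
/- Let p, s > 0 with ps > 1, and let f be a continuous function on [a,b] with a < b. Then ∫_a^b ∫_a^b |f(x)−f(y)|^p / |x−y|^{1+ps} dy dx ≥ c · |f(b)−f(a)|^p / (b−a)^{ps−1}, where c = (ps−1)^p · (8(ps+1))^{−p} / 4. -/
/-!
Garsia–Rodemich–Rumsey argument. Write `t = p s`, `K x y = |f x - f y|^p / |x - y|^(1+t)`,
`I x = ∫ K x y dy` and `B = ∫ I`. By the first moment method, for every `x` each interval
`(a, a + d)` inside `[a, b]` contains a point `x'` with `d I(x') ≤ 2B` and `d K(x, x') ≤ 2 I(x)`.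
Choosing a chain of such points `x_{n+1} ∈ (a, a + ρ^p (x_n - a))` gives `x_n ↓ a` with
`|f x_n - f x_{n+1}| ≤ (4B)^(1/p) (x_n - a)^((t-1)/p) / ρ²`, a geometrically decaying bound, so
`|f x₀ - f a|` is at most the sum of the geometric series. Reflecting `[a, b]` bounds `|f x₀ - f b|`
for the same starting point, and `ρ = 2^(-1/(t+1))` produces the constant of the statement.
-/

open MeasureTheory Set Filter Topology ENNReal

noncomputable def gagliardoKernel (f : ℝ → ℝ) (p t x y : ℝ) : ℝ≥0∞ :=
  ENNReal.ofReal (|f x - f y| ^ p / |x - y| ^ (1 + t))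

noncomputable def gagliardoEnergy (f : ℝ → ℝ) (p t a b : ℝ) : ℝ≥0∞ :=
  ∫⁻ x in Icc a b, ∫⁻ y in Icc a b, gagliardoKernel f p t x y

theorem measurable_gagliardoKernel {f : ℝ → ℝ} (hf : Measurable f) (p t : ℝ) :
    Measurable (Function.uncurry (gagliardoKernel f p t)) := by
  unfold gagliardoKernel Function.uncurry
  fun_prop

theorem exists_mem_mul_le_two_mul_setLIntegral {α : Type*} [MeasurableSpace α] {μ : Measure α}
    {s : Set α} (hs₀ : μ s ≠ 0) (hs : μ s ≠ ∞) {g₁ g₂ : α → ℝ≥0∞}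
    (hg₁ : AEMeasurable g₁ (μ.restrict s)) (hg₂ : AEMeasurable g₂ (μ.restrict s)) :
    ∃ x ∈ s, μ s * g₁ x ≤ 2 * ∫⁻ y in s, g₁ y ∂μ ∧ μ s * g₂ x ≤ 2 * ∫⁻ y in s, g₂ y ∂μ := by
  set G₁ := ∫⁻ y in s, g₁ y ∂μ
  set G₂ := ∫⁻ y in s, g₂ y ∂μ
  obtain ⟨x, hxs, hx⟩ := exists_le_setLAverage hs₀ hs
    ((hg₁.mul_const G₁⁻¹).add (hg₂.mul_const G₂⁻¹))
  have havg : ⨍⁻ y in s, (g₁ y * G₁⁻¹ + g₂ y * G₂⁻¹) ∂μ ≤ 2 / μ s := by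
    rw [setLAverage_eq, lintegral_add_left' (hg₁.mul_const _), lintegral_mul_const'' _ hg₁,
      lintegral_mul_const'' _ hg₂, ← one_add_one_eq_two]
    gcongr <;> exact ENNReal.mul_inv_le_one _
  have of_le_two_div : ∀ {g : α → ℝ≥0∞} {G : ℝ≥0∞}, g x * G⁻¹ ≤ 2 / μ s → μ s * g x ≤ 2 * G := by
    intro g G h
    rw [← div_eq_mul_inv, ENNReal.div_le_iff_le_mul (.inr (ENNReal.div_ne_top (by simp) hs₀))
      (.inr (by simp [hs]))] at h
    calc μ s * g x ≤ μ s * (2 / μ s * G) := by gcongr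
      _ = 2 * G := by rw [← mul_assoc, ENNReal.mul_div_cancel hs₀ hs]
  exact ⟨x, hxs, of_le_two_div (le_self_add.trans (hx.trans havg)),
    of_le_two_div (le_add_self.trans (hx.trans havg))⟩

theorem setLIntegral_Icc_comp_add_sub (a b : ℝ) (h : ℝ → ℝ≥0∞) :
    ∫⁻ x in Icc a b, h (a + b - x) = ∫⁻ x in Icc a b, h x := by
  rw [(Measure.measurePreserving_sub_left volume (a + b)).setLIntegral_comp_emb
    (MeasurableEquiv.subLeft (a + b)).measurableEmbedding, image_const_sub_Icc]
  simp

section Chain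

variable {K : ℝ → ℝ → ℝ≥0∞} {a b γ : ℝ}

theorem exists_next_chain_point (hK : Measurable (Function.uncurry K)) (hγ₀ : 0 < γ)
    (hγ₁ : γ ≤ 1) {x : ℝ} (hx : x ∈ Ioc a b)
    (hgood : ENNReal.ofReal (γ * (x - a)) * ∫⁻ y in Icc a b, K x y ≤
      2 * ∫⁻ u in Icc a b, ∫⁻ y in Icc a b, K u y) :
    ∃ x' ∈ Ioc a b, x' - a < γ * (x - a) ∧
      ENNReal.ofReal (γ * (x' - a)) * ∫⁻ y in Icc a b, K x' y ≤
        2 * ∫⁻ u in Icc a b, ∫⁻ y in Icc a b, K u y ∧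
      ENNReal.ofReal (γ * (x - a)) ^ 2 * K x x' ≤
        4 * ∫⁻ u in Icc a b, ∫⁻ y in Icc a b, K u y := by
  set B := ∫⁻ u in Icc a b, ∫⁻ y in Icc a b, K u y
  set d := γ * (x - a)
  have hd : 0 < d := mul_pos hγ₀ (sub_pos.2 hx.1)
  have hsub : Ioo a (a + d) ⊆ Icc a b := fun y hy =>
    ⟨hy.1.le, by nlinarith [hy.2, hx.1, hx.2]⟩
  obtain ⟨x', hx', hI, hKx⟩ := exists_mem_mul_le_two_mul_setLIntegral (μ := volume)
    (s := Ioo a (a + d)) (by simp [hd]) (by simp)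
    (hK.lintegral_prod_right' (ν := volume.restrict (Icc a b))).aemeasurable
    (hK.of_uncurry_left (x := x)).aemeasurable
  rw [Real.volume_Ioo, add_sub_cancel_left] at hI hKx
  refine ⟨x', ⟨hx'.1, (hsub hx').2⟩, by linarith [hx'.2], ?_, ?_⟩
  · calc ENNReal.ofReal (γ * (x' - a)) * ∫⁻ y in Icc a b, K x' y
        ≤ ENNReal.ofReal d * ∫⁻ y in Icc a b, K x' y := by
          gcongr; nlinarith [hx'.1, hx'.2]
      _ ≤ 2 * B := hI.trans (by gcongr; exact lintegral_mono_set hsub)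
  · calc ENNReal.ofReal d ^ 2 * K x x' = ENNReal.ofReal d * (ENNReal.ofReal d * K x x') := by
          ring
      _ ≤ ENNReal.ofReal d * (2 * ∫⁻ y in Icc a b, K x y) :=
          mul_le_mul_right (hKx.trans (mul_le_mul_right (lintegral_mono_set hsub) 2)) _
      _ = 2 * (ENNReal.ofReal d * ∫⁻ y in Icc a b, K x y) := by ring
      _ ≤ 4 * B := by rw [show (4 : ℝ≥0∞) = 2 * 2 by norm_num, mul_assoc]; gcongr

theorem exists_seq_chain (hK : Measurable (Function.uncurry K)) (hγ₀ : 0 < γ) (hγ₁ : γ ≤ 1)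
    {x₀ : ℝ} (hx₀ : x₀ ∈ Ioc a b)
    (h₀ : ENNReal.ofReal (γ * (x₀ - a)) * ∫⁻ y in Icc a b, K x₀ y ≤
      2 * ∫⁻ u in Icc a b, ∫⁻ y in Icc a b, K u y) :
    ∃ x : ℕ → ℝ, x 0 = x₀ ∧ ∀ n, a < x n ∧ x (n + 1) - a < γ * (x n - a) ∧
      ENNReal.ofReal (γ * (x n - a)) ^ 2 * K (x n) (x (n + 1)) ≤
        4 * ∫⁻ u in Icc a b, ∫⁻ y in Icc a b, K u y := by
  let P : ℝ → Prop := fun x => x ∈ Ioc a b ∧ ENNReal.ofReal (γ * (x - a)) *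
    ∫⁻ y in Icc a b, K x y ≤ 2 * ∫⁻ u in Icc a b, ∫⁻ y in Icc a b, K u y
  have step (x : Subtype P) : ∃ x' : Subtype P, x'.1 - a < γ * (x.1 - a) ∧
      ENNReal.ofReal (γ * (x.1 - a)) ^ 2 * K x x' ≤
        4 * ∫⁻ u in Icc a b, ∫⁻ y in Icc a b, K u y :=
    let ⟨x', hx', hlt, hgood, hK'⟩ := exists_next_chain_point hK hγ₀ hγ₁ x.2.1 x.2.2
    ⟨⟨x', hx', hgood⟩, hlt, hK'⟩
  choose next hnext using step
  refine ⟨fun n => (next^[n] ⟨x₀, hx₀, h₀⟩).1, rfl, fun n => ⟨(next^[n] _).2.1.1, ?_⟩⟩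
  simp only [Function.iterate_succ_apply']
  exact hnext _

end Chain

theorem rpow_abs_sub_le_of_gagliardoKernel_le {f : ℝ → ℝ} {p t x y d M : ℝ} (hxy : x ≠ y)
    (hd : 0 < d) (hM : 0 ≤ M)
    (h : ENNReal.ofReal d ^ 2 * gagliardoKernel f p t x y ≤ ENNReal.ofReal M) :
    |f x - f y| ^ p ≤ M * |x - y| ^ (1 + t) / d ^ 2 := by
  have hD : 0 < |x - y| ^ (1 + t) := Real.rpow_pos_of_pos (abs_pos.2 (sub_ne_zero.2 hxy)) _
  rw [gagliardoKernel, ← ENNReal.ofReal_pow hd.le, ← ENNReal.ofReal_mul (by positivity),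
    ENNReal.ofReal_le_ofReal_iff hM, mul_div_assoc', div_le_iff₀ hD] at h
  rw [le_div_iff₀ (by positivity)]
  linarith

theorem rpow_inv_mul_rpow_div_sq_rpow {X δ ρ p t : ℝ} (hX : 0 ≤ X) (hδ : 0 ≤ δ) (hρ : 0 ≤ ρ)
    (hp : p ≠ 0) :
    (X ^ p⁻¹ * δ ^ ((t - 1) / p) / ρ ^ 2) ^ p = X * δ ^ (t - 1) / (ρ ^ p) ^ 2 := by
  rw [Real.div_rpow (by positivity) (by positivity), Real.mul_rpow (by positivity) (by positivity),
    Real.rpow_inv_rpow hX hp, ← Real.rpow_mul hδ, div_mul_cancel₀ _ hp, Real.rpow_pow_comm hρ]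

theorem abs_sub_le_of_gagliardoKernel_le {f : ℝ → ℝ} {p t a x y ρ B : ℝ} (hp : 0 < p)
    (ht : 1 < t) (hρ₀ : 0 < ρ) (hρ₁ : ρ ≤ 1) (hB : 0 ≤ B) (hay : a < y)
    (hyx : y - a < ρ ^ p * (x - a))
    (h : ENNReal.ofReal (ρ ^ p * (x - a)) ^ 2 * gagliardoKernel f p t x y ≤
      ENNReal.ofReal (4 * B)) :
    |f x - f y| ≤ (4 * B) ^ p⁻¹ * (x - a) ^ ((t - 1) / p) / ρ ^ 2 := by
  have hγ₀ : 0 < ρ ^ p := Real.rpow_pos_of_pos hρ₀ p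
  have hγ₁ : ρ ^ p ≤ 1 := Real.rpow_le_one hρ₀.le hρ₁ hp.le
  have hδ : 0 < x - a := by nlinarith
  have hyx' : y < x := by nlinarith
  have hΔ : |f x - f y| ^ p ≤ 4 * B * (x - a) ^ (t - 1) / (ρ ^ p) ^ 2 :=
    calc |f x - f y| ^ p ≤ 4 * B * |x - y| ^ (1 + t) / (ρ ^ p * (x - a)) ^ 2 :=
          rpow_abs_sub_le_of_gagliardoKernel_le hyx'.ne' (mul_pos hγ₀ hδ) (by positivity) h
      _ ≤ 4 * B * (x - a) ^ (1 + t) / (ρ ^ p * (x - a)) ^ 2 := by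
          gcongr
          rw [abs_of_pos (sub_pos.2 hyx')]
          linarith
      _ = 4 * B * (x - a) ^ (t - 1) / (ρ ^ p) ^ 2 := by
          rw [show 1 + t = (t - 1) + 2 by ring, Real.rpow_add hδ, Real.rpow_two]
          field_simp
  exact (Real.rpow_le_rpow_iff (abs_nonneg _) (by positivity) hp).1
    (by rwa [rpow_inv_mul_rpow_div_sq_rpow (by positivity) hδ.le hρ₀.le hp.ne'])

theorem abs_sub_left_le_of_gagliardoEnergy_ne_top {f : ℝ → ℝ} {p t a b ρ x₀ : ℝ}
    (hf : Measurable f) (hfa : ContinuousAt f a) (hp : 0 < p) (ht : 1 < t) (hρ₀ : 0 < ρ)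
    (hρ₁ : ρ < 1) (hB : gagliardoEnergy f p t a b ≠ ∞) (hx₀ : x₀ ∈ Ioc a b)
    (h₀ : ENNReal.ofReal (x₀ - a) * ∫⁻ y in Icc a b, gagliardoKernel f p t x₀ y ≤
      2 * gagliardoEnergy f p t a b) :
    |f x₀ - f a| ≤ (4 * (gagliardoEnergy f p t a b).toReal) ^ p⁻¹ * (x₀ - a) ^ ((t - 1) / p) /
      (ρ ^ 2 * (1 - ρ ^ (t - 1))) := by
  set B := (gagliardoEnergy f p t a b).toReal
  set θ := (t - 1) / p
  set γ := ρ ^ p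
  have hγ₀ : 0 < γ := Real.rpow_pos_of_pos hρ₀ p
  have hγ₁ : γ < 1 := Real.rpow_lt_one hρ₀.le hρ₁ hp
  obtain ⟨x, rfl, hx⟩ := exists_seq_chain (measurable_gagliardoKernel hf p t) hγ₀ hγ₁.le hx₀
    (le_trans (by gcongr; nlinarith [hx₀.1]) h₀)
  have hdecay (n : ℕ) : x n - a ≤ γ ^ n * (x 0 - a) := by
    induction n with
    | zero => simp
    | succ n ih => rw [pow_succ']; nlinarith [(hx n).2.1]
  have hlim : Tendsto x atTop (𝓝 a) := by
    have h : Tendsto (fun n => a + γ ^ n * (x 0 - a)) atTop (𝓝 (a + 0 * (x 0 - a))) :=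
      ((tendsto_pow_atTop_nhds_zero_of_lt_one hγ₀.le hγ₁).mul_const _).const_add a
    rw [zero_mul, add_zero] at h
    exact tendsto_of_tendsto_of_tendsto_of_le_of_le tendsto_const_nhds h
      (fun n => (hx n).1.le) (fun n => by linarith [hdecay n])
  have hstep (n : ℕ) : dist (f (x n)) (f (x (n + 1))) ≤
      (4 * B) ^ p⁻¹ * (x 0 - a) ^ θ / ρ ^ 2 * (ρ ^ (t - 1)) ^ n := by
    have hgeom : (x n - a) ^ θ ≤ (x 0 - a) ^ θ * (ρ ^ (t - 1)) ^ n := by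
      calc (x n - a) ^ θ ≤ (γ ^ n * (x 0 - a)) ^ θ :=
            Real.rpow_le_rpow (sub_pos.2 (hx n).1).le (hdecay n) (div_nonneg (by linarith) hp.le)
        _ = (x 0 - a) ^ θ * (ρ ^ (t - 1)) ^ n := by
          rw [Real.mul_rpow (by positivity) (sub_pos.2 hx₀.1).le, mul_comm,
            ← Real.rpow_pow_comm hγ₀.le, ← Real.rpow_mul hρ₀.le, mul_div_cancel₀ _ hp.ne']
    rw [Real.dist_eq]
    calc |f (x n) - f (x (n + 1))| ≤ (4 * B) ^ p⁻¹ * (x n - a) ^ θ / ρ ^ 2 :=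
          abs_sub_le_of_gagliardoKernel_le hp ht hρ₀ hρ₁.le ENNReal.toReal_nonneg
            (hx (n + 1)).1 (hx n).2.1
            (by rw [ENNReal.ofReal_mul zero_le_four, ENNReal.ofReal_toReal hB,
              ENNReal.ofReal_ofNat]; exact (hx n).2.2)
      _ ≤ (4 * B) ^ p⁻¹ * ((x 0 - a) ^ θ * (ρ ^ (t - 1)) ^ n) / ρ ^ 2 := by gcongr
      _ = (4 * B) ^ p⁻¹ * (x 0 - a) ^ θ / ρ ^ 2 * (ρ ^ (t - 1)) ^ n := by ring
  have := dist_le_of_le_geometric_of_tendsto₀ _ _ (Real.rpow_lt_one hρ₀.le hρ₁ (by linarith))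
    hstep (hfa.tendsto.comp hlim)
  rwa [Real.dist_eq, div_div] at this

theorem gagliardoKernel_comp_const_sub (f : ℝ → ℝ) (p t c x y : ℝ) :
    gagliardoKernel (fun z => f (c - z)) p t x y = gagliardoKernel f p t (c - x) (c - y) := by
  rw [gagliardoKernel, gagliardoKernel, show c - x - (c - y) = -(x - y) by ring, abs_neg]

theorem setLIntegral_gagliardoKernel_comp_add_sub (f : ℝ → ℝ) (p t a b x : ℝ) :
    ∫⁻ y in Icc a b, gagliardoKernel (fun z => f (a + b - z)) p t x y =
      ∫⁻ y in Icc a b, gagliardoKernel f p t (a + b - x) y := by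
  simp only [gagliardoKernel_comp_const_sub]
  exact setLIntegral_Icc_comp_add_sub a b (gagliardoKernel f p t (a + b - x))

theorem gagliardoEnergy_comp_add_sub (f : ℝ → ℝ) (p t a b : ℝ) :
    gagliardoEnergy (fun z => f (a + b - z)) p t a b = gagliardoEnergy f p t a b := by
  simp only [gagliardoEnergy, setLIntegral_gagliardoKernel_comp_add_sub]
  exact setLIntegral_Icc_comp_add_sub a b (fun x => ∫⁻ y in Icc a b, gagliardoKernel f p t x y)

theorem abs_sub_le_of_gagliardoEnergy_ne_top {f : ℝ → ℝ} {p t a b ρ : ℝ}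
    (hf : Measurable f) (hfa : ContinuousAt f a) (hfb : ContinuousAt f b) (hp : 0 < p)
    (ht : 1 < t) (hρ₀ : 0 < ρ) (hρ₁ : ρ < 1) (hab : a < b)
    (hB : gagliardoEnergy f p t a b ≠ ∞) :
    |f b - f a| ≤ 2 * ((4 * (gagliardoEnergy f p t a b).toReal) ^ p⁻¹ *
      (b - a) ^ ((t - 1) / p) / (ρ ^ 2 * (1 - ρ ^ (t - 1)))) := by
  have hI := (measurable_gagliardoKernel hf p t).lintegral_prod_right'
    (ν := volume.restrict (Icc a b))
  obtain ⟨x₀, hx₀, h₀, -⟩ := exists_mem_mul_le_two_mul_setLIntegral (μ := volume)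
    (s := Ioo a b) (by simp [hab]) (by simp) hI.aemeasurable hI.aemeasurable
  rw [Real.volume_Ioo] at h₀
  have hgood : ENNReal.ofReal (b - a) * ∫⁻ y in Icc a b, gagliardoKernel f p t x₀ y ≤
      2 * gagliardoEnergy f p t a b :=
    h₀.trans (by gcongr; exact lintegral_mono_set Ioo_subset_Icc_self)
  have hleft := abs_sub_left_le_of_gagliardoEnergy_ne_top hf hfa hp ht hρ₀ hρ₁ hB
    (Ioo_subset_Ioc_self hx₀) (le_trans (by gcongr; linarith [hx₀.2]) hgood)
  have hright := abs_sub_left_le_of_gagliardoEnergy_ne_top (f := fun z => f (a + b - z))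
    (hf.comp (by fun_prop)) (hfb.comp_of_eq (continuous_sub_left (a + b)).continuousAt (by ring))
    hp ht hρ₀ hρ₁
    (by rwa [gagliardoEnergy_comp_add_sub]) (x₀ := a + b - x₀)
    ⟨by linarith [hx₀.2], by linarith [hx₀.1]⟩
    (by
      rw [setLIntegral_gagliardoKernel_comp_add_sub, gagliardoEnergy_comp_add_sub,
        _root_.sub_sub_cancel]
      exact le_trans (by gcongr; linarith [hx₀.1]) hgood)
  rw [gagliardoEnergy_comp_add_sub, _root_.sub_sub_cancel, add_sub_cancel_left,
    show a + b - x₀ - a = b - x₀ by ring, abs_sub_comm] at hright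
  have hD : 0 < ρ ^ 2 * (1 - ρ ^ (t - 1)) :=
    mul_pos (by positivity) (sub_pos.2 (Real.rpow_lt_one hρ₀.le hρ₁ (by linarith)))
  have hmono {z : ℝ} (hz₀ : 0 ≤ z) (hz : z ≤ b - a) :
      (4 * (gagliardoEnergy f p t a b).toReal) ^ p⁻¹ * z ^ ((t - 1) / p) /
        (ρ ^ 2 * (1 - ρ ^ (t - 1))) ≤ (4 * (gagliardoEnergy f p t a b).toReal) ^ p⁻¹ *
          (b - a) ^ ((t - 1) / p) / (ρ ^ 2 * (1 - ρ ^ (t - 1))) := by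
    gcongr
  linarith [abs_sub_le (f b) (f x₀) (f a), hmono (sub_nonneg.2 hx₀.1.le) (by linarith [hx₀.2]),
    hmono (sub_nonneg.2 hx₀.2.le) (by linarith [hx₀.1])]

theorem le_sq_mul_one_sub_rpow {t : ℝ} (ht : 1 < t) :
    (t - 1) / (4 * (t + 1)) ≤
      ((1 / 2 : ℝ) ^ (t + 1)⁻¹) ^ 2 * (1 - ((1 / 2 : ℝ) ^ (t + 1)⁻¹) ^ (t - 1)) := by
  have ht₀ : 0 < t + 1 := by linarith
  set u := (t - 1) / (t + 1)
  have hu₀ : 0 ≤ u := div_nonneg (by linarith) ht₀.le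
  have hu₁ : u ≤ 1 := (div_le_one ht₀).2 (by linarith)
  have hsq : 1 / 2 ≤ ((1 / 2 : ℝ) ^ (t + 1)⁻¹) ^ 2 := by
    rw [← Real.rpow_mul_natCast (by norm_num)]
    calc (1 / 2 : ℝ) = (1 / 2) ^ (1 : ℝ) := (Real.rpow_one _).symm
      _ ≤ _ := Real.rpow_le_rpow_of_exponent_ge (by norm_num) (by norm_num) (by
        rw [inv_mul_eq_div, div_le_one ht₀]; push_cast; linarith)
  have hbern : ((1 / 2 : ℝ) ^ (t + 1)⁻¹) ^ (t - 1) ≤ 1 - u / 2 := by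
    rw [← Real.rpow_mul (by norm_num), inv_mul_eq_div]
    have := rpow_one_add_le_one_add_mul_self (s := -(1 / 2)) (by norm_num) hu₀ hu₁
    norm_num at this ⊢
    linarith
  calc (t - 1) / (4 * (t + 1)) = 1 / 2 * (u / 2) := by simp only [u]; field_simp; ring
    _ ≤ _ := by gcongr; linarith

theorem mul_rpow_div_rpow_le_of_le {p t L B Δ D : ℝ} (hp : 0 < p) (ht : 1 < t) (hL : 0 < L)
    (hB : 0 ≤ B) (hΔ : 0 ≤ Δ) (hD : (t - 1) / (4 * (t + 1)) ≤ D)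
    (h : Δ ≤ 2 * ((4 * B) ^ p⁻¹ * L ^ ((t - 1) / p) / D)) :
    (t - 1) ^ p * (8 * (t + 1)) ^ (-p) / 4 * (Δ ^ p / L ^ (t - 1)) ≤ B := by
  set q := (t - 1) / (8 * (t + 1))
  set Y := (4 * B) ^ p⁻¹ * L ^ ((t - 1) / p)
  have hq : 0 < q := div_pos (by linarith) (by linarith)
  have hD₀ : 0 < D := lt_of_lt_of_le (div_pos (by linarith) (by linarith)) hD
  have hqΔ : q * Δ ≤ Y :=
    calc q * Δ ≤ q * (2 * (Y / D)) := by gcongr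
      _ = 2 * q / D * Y := by ring
      _ ≤ 1 * Y := by
        gcongr
        rw [div_le_one hD₀]
        calc 2 * q = (t - 1) / (4 * (t + 1)) := by simp only [q]; field_simp; ring
          _ ≤ D := hD
      _ = Y := one_mul Y
  have hY : Y ^ p = 4 * B * L ^ (t - 1) := by
    rw [Real.mul_rpow (by positivity) (by positivity), Real.rpow_inv_rpow (by positivity) hp.ne',
      ← Real.rpow_mul hL.le, div_mul_cancel₀ _ hp.ne']
  have hc : (t - 1) ^ p * (8 * (t + 1)) ^ (-p) = q ^ p := by
    rw [Real.rpow_neg (by linarith), ← div_eq_mul_inv,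
      Real.div_rpow (by linarith) (by linarith)]
  have hpow : (q * Δ) ^ p ≤ 4 * B * L ^ (t - 1) :=
    hY ▸ Real.rpow_le_rpow (by positivity) hqΔ hp.le
  rw [Real.mul_rpow hq.le hΔ] at hpow
  rw [hc, div_mul_div_comm, div_le_iff₀ (by positivity)]
  linarith

theorem stmt7_general (p s a b : ℝ) (hp : 0 < p) (hps : 1 < p * s)
    (hab : a < b) (f : ℝ → ℝ) (hf : ContinuousOn f (Icc a b)) :
    ENNReal.ofReal ((p * s - 1) ^ p * (8 * (p * s + 1)) ^ (-p) / 4 *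
        (|f b - f a| ^ p / (b - a) ^ (p * s - 1))) ≤
      ∫⁻ x in Icc a b, ∫⁻ y in Icc a b,
        ENNReal.ofReal (|f x - f y| ^ p / |x - y| ^ (1 + p * s)) := by
  obtain ⟨g, hg, hgf⟩ : ∃ g : ℝ → ℝ, Continuous g ∧ EqOn g f (Icc a b) :=
    ⟨IccExtend hab.le ((Icc a b).domRestrict f), hf.domRestrict.Icc_extend',
      fun x hx => IccExtend_of_mem _ _ hx⟩
  have henergy : ∫⁻ x in Icc a b, ∫⁻ y in Icc a b,
      ENNReal.ofReal (|f x - f y| ^ p / |x - y| ^ (1 + p * s)) = gagliardoEnergy g p (p * s) a b :=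
    setLIntegral_congr_fun measurableSet_Icc fun x hx =>
      setLIntegral_congr_fun measurableSet_Icc fun y hy => by rw [gagliardoKernel, hgf hx, hgf hy]
  rw [henergy, ← hgf (left_mem_Icc.2 hab.le), ← hgf (right_mem_Icc.2 hab.le)]
  by_cases hB : gagliardoEnergy g p (p * s) a b = ∞
  · simp [hB]
  have hρ₁ : (1 / 2 : ℝ) ^ (p * s + 1)⁻¹ < 1 :=
    Real.rpow_lt_one (by norm_num) (by norm_num) (by positivity)
  rw [← ENNReal.ofReal_toReal hB]
  exact ENNReal.ofReal_le_ofReal <| mul_rpow_div_rpow_le_of_le hp hps (sub_pos.2 hab)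
    ENNReal.toReal_nonneg (abs_nonneg _) (le_sq_mul_one_sub_rpow hps)
    (abs_sub_le_of_gagliardoEnergy_ne_top hg.measurable hg.continuousAt hg.continuousAt hp hps
      (by positivity) hρ₁ hab hB)

theorem stmt7 (p s a b : ℝ) (hp : 0 < p) (hs : 0 < s) (hps : 1 < p * s)
    (hab : a < b) (f : ℝ → ℝ) (hf : ContinuousOn f (Icc a b)) :
    ENNReal.ofReal ((p * s - 1) ^ p * (8 * (p * s + 1)) ^ (-p) / 4 *
        (|f b - f a| ^ p / (b - a) ^ (p * s - 1))) ≤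
      ∫⁻ x in Icc a b, ∫⁻ y in Icc a b,
        ENNReal.ofReal (|f x - f y| ^ p / |x - y| ^ (1 + p * s)) :=
  stmt7_general p s a b hp hps hab f hf
end

section
/- Let 0 < s < 1 and p ≥ 2 with ps > 1, p − 1 − ps < 0, and let W_{p,s} be as defined (the remainder potential on (0,1)). Then W_{p,s}(x) · (1−x)^{1+ps−p} converges to a positive finite limit as x → 1⁻. -/
/-!
Write `a = (ps - 1)/p ∈ (0, 1)`. The substitution `y = x + (1 - x) t` turns
`(1 - x)^(1+ps-p) ∫_1^∞ (y^a - x^a)^(p-1) (y - x)^(-1-ps) dy` into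
`∫_1^∞ D_x(t)^(p-1) t^(-1-ps) dt`, where
`D_x(t) = scaledRpowIncrement a x t = ((x + (1 - x) t)^a - x^a)/(1 - x)`.
As `x → 1⁻`, `D_x(t) → a t` (the derivative of `u ↦ u^a` at `1`), and concavity of `u ↦ u^a`
gives `D_x(t) ≤ 2 a t` for `x ≥ 1/2`. Since `p - 1 - ps < 0` the majorant
`(2 a t)^(p-1) t^(-1-ps)` is integrable on `(1, ∞)`, so dominated convergence yields the limit
`2 a^(p-1) / (1 + ps - p)`.
-/

open MeasureTheory Set Filter
open scoped Topology

namespace Real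

theorem rpow_sub_rpow_le_mul_rpow_sub_one_mul {a x y : ℝ} (ha0 : 0 ≤ a) (ha1 : a ≤ 1)
    (hx : 0 < x) (hxy : x ≤ y) : y ^ a - x ^ a ≤ a * x ^ (a - 1) * (y - x) := by
  have hz : 0 ≤ (y - x) / x := div_nonneg (sub_nonneg.2 hxy) hx.le
  have hy : y = x * (1 + (y - x) / x) := by field_simp; ring
  calc y ^ a - x ^ a = x ^ a * (1 + (y - x) / x) ^ a - x ^ a := by
        rw [hy, mul_rpow hx.le (by linarith)]; field_simp; ring_nf
    _ ≤ x ^ a * (1 + a * ((y - x) / x)) - x ^ a := by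
        gcongr; exact rpow_one_add_le_one_add_mul_self (by linarith) ha0 ha1
    _ = a * x ^ (a - 1) * (y - x) := by
        rw [rpow_sub_one hx.ne']; field_simp; ring

theorem mul_rpow_mul_rpow_eqOn {b : ℝ} (hb : 0 ≤ b) (q r : ℝ) :
    EqOn (fun t => (b * t) ^ q * t ^ r) (fun t => b ^ q * t ^ (q + r)) (Ioi 0) := by
  intro t (ht : 0 < t)
  simp only [mul_rpow hb ht.le, rpow_add ht]
  ring

end Real

open Real

theorem integrableOn_Ioi_one_mul_rpow_mul_rpow {b q r : ℝ} (hb : 0 ≤ b) (hqr : q + r < -1) :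
    IntegrableOn (fun t => (b * t) ^ q * t ^ r) (Ioi 1) :=
  IntegrableOn.congr_fun ((integrableOn_Ioi_rpow_of_lt hqr one_pos).const_mul _)
    ((mul_rpow_mul_rpow_eqOn hb q r).symm.mono (Ioi_subset_Ioi zero_le_one)) measurableSet_Ioi

theorem integral_Ioi_one_mul_rpow_mul_rpow {b q r : ℝ} (hb : 0 ≤ b) (hqr : q + r < -1) :
    ∫ t in Ioi 1, (b * t) ^ q * t ^ r = b ^ q / -(q + r + 1) := by
  rw [setIntegral_congr_fun measurableSet_Ioi
    ((mul_rpow_mul_rpow_eqOn hb q r).mono (Ioi_subset_Ioi zero_le_one)),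
    integral_const_mul, integral_Ioi_rpow_of_lt hqr one_pos, one_rpow, neg_div, div_neg,
    mul_neg, mul_one_div]

theorem integral_Ioi_one_comp_add_mul (g : ℝ → ℝ) (x : ℝ) {c : ℝ} (hc : 0 < c) :
    ∫ t in Ioi 1, g (x + c * t) = c⁻¹ * ∫ y in Ioi (x + c), g y := by
  rw [integral_comp_mul_left_Ioi (fun u => g (x + u)) 1 hc, mul_one, smul_eq_mul]
  congr 1
  have hpre : (fun u => x + u) ⁻¹' Ioi (x + c) = Ioi c := by ext u; simp
  have := (measurePreserving_add_left volume x).setIntegral_preimage_emb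
    (measurableEmbedding_addLeft x) g (Ioi (x + c))
  rwa [hpre] at this

noncomputable def scaledRpowIncrement (a x t : ℝ) : ℝ :=
  ((x + (1 - x) * t) ^ a - x ^ a) / (1 - x)

theorem tendsto_scaledRpowIncrement (a t : ℝ) :
    Tendsto (fun x => scaledRpowIncrement a x t) (𝓝[<] 1) (𝓝 (a * t)) := by
  set φ : ℝ → ℝ := fun u => (u + (1 - u) * t) ^ a - u ^ a
  have hinner : HasDerivAt (fun u : ℝ => u + (1 - u) * t) (1 - t) 1 :=
    ((hasDerivAt_id' 1).add (((hasDerivAt_id' 1).const_sub 1).mul_const t)).congr_deriv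
      (by ring)
  have hφ : HasDerivAt φ (-(a * t)) 1 :=
    ((hinner.rpow_const (p := a) (by norm_num)).sub
      (hasDerivAt_rpow_const (x := 1) (p := a) (by norm_num))).congr_deriv (by simp; ring)
  have hslope := (hasDerivAt_iff_tendsto_slope.mp hφ).neg.mono_left
    (nhdsWithin_mono 1 fun x (hx : x < 1) => hx.ne)
  rw [neg_neg] at hslope
  refine hslope.congr' (eventually_nhdsWithin_of_forall fun x _ => ?_)
  simp only [slope_def_field, φ, scaledRpowIncrement, sub_self, zero_mul, add_zero, one_rpow,
    sub_zero]
  rw [← div_neg, neg_sub]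
theorem scaledRpowIncrement_nonneg {a x t : ℝ} (ha : 0 ≤ a) (hx0 : 0 ≤ x) (hx1 : x < 1)
    (ht : 0 ≤ t) : 0 ≤ scaledRpowIncrement a x t :=
  div_nonneg (sub_nonneg.2 (rpow_le_rpow hx0 (by nlinarith) ha)) (by linarith)

theorem scaledRpowIncrement_le {a x t : ℝ} (ha0 : 0 ≤ a) (ha1 : a ≤ 1) (hx0 : 1 / 2 ≤ x)
    (hx1 : x < 1) (ht : 0 ≤ t) : scaledRpowIncrement a x t ≤ 2 * a * t := by
  have hx : 0 < x := by linarith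
  have hc : 0 < 1 - x := by linarith
  have hxa : x ^ (a - 1) ≤ 2 :=
    calc x ^ (a - 1) ≤ x ^ (-1 : ℝ) := rpow_le_rpow_of_exponent_ge hx hx1.le (by linarith)
      _ = x⁻¹ := rpow_neg_one x
      _ ≤ 2 := by rw [inv_le_comm₀ hx two_pos]; linarith
  rw [scaledRpowIncrement, div_le_iff₀ hc]
  calc (x + (1 - x) * t) ^ a - x ^ a ≤ a * x ^ (a - 1) * (x + (1 - x) * t - x) :=
        rpow_sub_rpow_le_mul_rpow_sub_one_mul ha0 ha1 hx (by nlinarith)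
    _ ≤ a * 2 * ((1 - x) * t) := by
        rw [add_sub_cancel_left]; gcongr
    _ = 2 * a * t * (1 - x) := by ring
theorem integral_rpow_sub_rpow_mul_rpow_mul_eq {a x : ℝ} (ha : 0 ≤ a) (hx0 : 0 ≤ x)
    (hx1 : x < 1) (q r : ℝ) :
    (∫ y in Ioi 1, (y ^ a - x ^ a) ^ q * (y - x) ^ r) * (1 - x) ^ (-(q + r + 1)) =
      ∫ t in Ioi 1, scaledRpowIncrement a x t ^ q * t ^ r := by
  set g : ℝ → ℝ := fun y => (y ^ a - x ^ a) ^ q * (y - x) ^ r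
  have hc : 0 < 1 - x := by linarith
  have hpt : ∀ t ∈ Ioi (1 : ℝ),
      scaledRpowIncrement a x t ^ q * t ^ r = (1 - x) ^ (-(q + r)) * g (x + (1 - x) * t) := by
    intro t (ht : 1 < t)
    have hnum : 0 ≤ (x + (1 - x) * t) ^ a - x ^ a :=
      sub_nonneg.2 (rpow_le_rpow hx0 (by nlinarith) ha)
    simp only [g, scaledRpowIncrement, add_sub_cancel_left, div_rpow hnum hc.le,
      mul_rpow hc.le (by linarith : (0 : ℝ) ≤ t), neg_add, rpow_add hc, rpow_neg hc.le]
    field_simp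
  rw [setIntegral_congr_fun measurableSet_Ioi hpt, integral_const_mul,
    integral_Ioi_one_comp_add_mul g x hc, add_sub_cancel, ← mul_assoc, ← rpow_neg_one,
    ← rpow_add hc, mul_comm]
  ring_nf

theorem tendsto_integral_rpow_sub_rpow_mul_rpow_mul {a q r : ℝ} (ha0 : 0 < a) (ha1 : a ≤ 1)
    (hq : 0 ≤ q) (hqr : q + r < -1) :
    Tendsto (fun x => (∫ y in Ioi 1, (y ^ a - x ^ a) ^ q * (y - x) ^ r) * (1 - x) ^ (-(q + r + 1)))
      (𝓝[<] 1) (𝓝 (a ^ q / -(q + r + 1))) := by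
  have hnear : ∀ᶠ x in 𝓝[<] (1 : ℝ), x ∈ Ico (1 / 2) 1 := Ico_mem_nhdsLT (by norm_num)
  have hdom : Tendsto (fun x => ∫ t in Ioi 1, scaledRpowIncrement a x t ^ q * t ^ r) (𝓝[<] 1)
      (𝓝 (∫ t in Ioi 1, (a * t) ^ q * t ^ r)) := by
    refine tendsto_integral_filter_of_dominated_convergence (fun t => (2 * a * t) ^ q * t ^ r)
      (Eventually.of_forall fun x => ?_) ?_
      (integrableOn_Ioi_one_mul_rpow_mul_rpow (by positivity) hqr) ?_
    · exact Measurable.aestronglyMeasurable (by unfold scaledRpowIncrement; fun_prop)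
    · filter_upwards [hnear] with x ⟨hx0, hx1⟩
      refine (ae_restrict_iff' measurableSet_Ioi).2 (ae_of_all _ fun t (ht : 1 < t) => ?_)
      have hS := scaledRpowIncrement_nonneg ha0.le (by linarith) hx1 (by linarith : 0 ≤ t)
      rw [norm_of_nonneg (by positivity)]
      gcongr
      exact scaledRpowIncrement_le ha0.le ha1 hx0 hx1 (by linarith)
    · refine (ae_restrict_iff' measurableSet_Ioi).2 (ae_of_all _ fun t (ht : 1 < t) => ?_)
      exact ((continuousAt_rpow_const _ _ (Or.inl (by positivity))).tendsto.comp
        (tendsto_scaledRpowIncrement a t)).mul_const _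
  rw [← integral_Ioi_one_mul_rpow_mul_rpow ha0.le hqr]
  exact hdom.congr' (hnear.mono fun x hx =>
    (integral_rpow_sub_rpow_mul_rpow_mul_eq ha0.le (by linarith [hx.1]) hx.2 q r).symm)

theorem stmt10_general (p s : ℝ) (hs1 : s < 1) (hp : 2 ≤ p) (hps : 1 < p * s)
    (hcrit : p - 1 - p * s < 0) :
    let W : ℝ → ℝ := fun x =>
      2 * x ^ (-((p - 1) * (p * s - 1) / p)) *
        ∫ y in Ioi (1:ℝ),
          (y ^ ((p * s - 1) / p) - x ^ ((p * s - 1) / p)) ^ (p - 1) *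
            (y - x) ^ (-1 - p * s)
    ∃ L : ℝ, 0 < L ∧
      Tendsto (fun x => W x * (1 - x) ^ (1 + p * s - p))
        (nhdsWithin 1 (Iio (1:ℝ))) (nhds L) := by
  intro W
  have hp0 : 0 < p := by linarith
  have ha0 : 0 < (p * s - 1) / p := div_pos (by linarith) hp0
  have ha1 : (p * s - 1) / p ≤ 1 := (div_le_one hp0).2 (by nlinarith)
  have hI := tendsto_integral_rpow_sub_rpow_mul_rpow_mul ha0 ha1 (q := p - 1) (r := -1 - p * s)
    (by linarith) (by linarith)
  rw [show -(p - 1 + (-1 - p * s) + 1) = 1 + p * s - p by ring] at hI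
  have hprefactor : Tendsto (fun x : ℝ => 2 * x ^ (-((p - 1) * (p * s - 1) / p))) (𝓝[<] 1)
      (𝓝 2) := by
    simpa using ((continuousAt_rpow_const 1 _ (Or.inl one_ne_zero)).tendsto.mono_left
      nhdsWithin_le_nhds).const_mul 2
  refine ⟨2 * (((p * s - 1) / p) ^ (p - 1) / (1 + p * s - p)),
    mul_pos two_pos (div_pos (rpow_pos_of_pos ha0 _) (by linarith)), ?_⟩
  exact (hprefactor.mul hI).congr fun x => by simp only [W]; ring

theorem stmt10 (p s : ℝ) (hs : 0 < s) (hs1 : s < 1) (hp : 2 ≤ p) (hps : 1 < p * s)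
    (hcrit : p - 1 - p * s < 0) :
    let W : ℝ → ℝ := fun x =>
      2 * x ^ (-((p - 1) * (p * s - 1) / p)) *
        ∫ y in Ioi (1:ℝ),
          (y ^ ((p * s - 1) / p) - x ^ ((p * s - 1) / p)) ^ (p - 1) *
            (y - x) ^ (-1 - p * s)
    ∃ L : ℝ, 0 < L ∧
      Tendsto (fun x => W x * (1 - x) ^ (1 + p * s - p))
        (nhdsWithin 1 (Iio (1:ℝ))) (nhds L) :=
  stmt10_general p s hs1 hp hps hcrit
end
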